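/- Let T > 0, let A : [0,T] → [0,∞) be continuous, nondecreasing with A(0) = 0, with Lebesgue–Stieltjes measure dA, let μ > 0, n ≥ 0, t ∈ [0,T], and let h : [0,T] → ℝ be Borel measurable and dA-integrable on (t,T]. Then ( ∫_{(t,T]} e^{−n(s−t)} h(s) dA(s) )² ≤ (1/μ) ∫_{(t,T]} e^{−2n(s−t)} e^{μ(A(s) − A(t))} h(s)² dA(s). -/

import Mathlib

open MeasureTheory Set Real
open scoped ENNReal

/-!
Write the integrand as `e^{-μ(A-A_t)/2} · e^{μ(A-A_t)/2} e^{-n(s-t)} h` and apply Cauchy–Schwarz;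
it remains to bound `∫_{(t,T]} e^{-μ(A(s)-A(t))} dA(s)` by `1/μ`. Continuity of `A` gives
`dA({s ∈ (t,T] : A(s) - A(t) < x}) ≤ x`, i.e. `A - A(t)` dominates a Lebesgue-distributed
variable, and the layer-cake formula turns this into
`∫ e^{-μ(A-A_t)} dA ≤ ∫_0^1 -log(l)/μ dl = 1/μ`.
-/

theorem lintegral_ofReal_neg_log_Ioi_zero :
    ∫⁻ x in Ioi (0 : ℝ), ENNReal.ofReal (-log x) = 1 := by
  have h_tail : ∫⁻ x in Ioi (1 : ℝ), ENNReal.ofReal (-log x) = 0 :=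
    setLIntegral_eq_zero measurableSet_Ioi fun x hx ↦
      ENNReal.ofReal_eq_zero.2 (neg_nonpos.2 (log_nonneg (le_of_lt hx)))
  have h_int : IntegrableOn (fun x ↦ -log x) (Ioc 0 1) :=
    (intervalIntegral.intervalIntegrable_log' (a := 0) (b := 1)).1.neg
  have h_nonneg : 0 ≤ᵐ[volume.restrict (Ioc (0 : ℝ) 1)] fun x ↦ -log x :=
    (ae_restrict_iff' measurableSet_Ioc).2 <| .of_forall fun x hx ↦
      neg_nonneg.2 (log_nonpos hx.1.le hx.2)
  rw [← Ioc_union_Ioi_eq_Ioi zero_le_one, lintegral_union measurableSet_Ioi Ioc_disjoint_Ioi_same,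
    h_tail, add_zero, ← ofReal_integral_eq_lintegral_ofReal h_int h_nonneg,
    integral_neg, ← intervalIntegral.integral_of_le zero_le_one, integral_log]
  simp

variable {α : Type*} [MeasurableSpace α]

theorem lintegral_ofReal_exp_neg_mul_le {ν : Measure α} {X : α → ℝ} (hX : AEMeasurable X ν)
    (h_distrib : ∀ x, ν {a | X a < x} ≤ ENNReal.ofReal x) {μ : ℝ} (hμ : 0 < μ) :
    ∫⁻ a, ENNReal.ofReal (exp (-(μ * X a))) ∂ν ≤ ENNReal.ofReal (1 / μ) := by
  have h_level : ∀ l ∈ Ioi (0 : ℝ),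
      ν {a | l < exp (-(μ * X a))} ≤ ENNReal.ofReal (1 / μ) * ENNReal.ofReal (-log l) := by
    intro l hl
    have h_set : {a | l < exp (-(μ * X a))} = {a | X a < -log l / μ} := by
      ext a
      simp only [mem_ofPred_eq, ← log_lt_iff_lt_exp hl, lt_div_iff₀ hμ]
      constructor <;> intro h <;> linarith
    rw [h_set, ← ENNReal.ofReal_mul (by positivity)]
    convert h_distrib _ using 2
    ring
  calc ∫⁻ a, ENNReal.ofReal (exp (-(μ * X a))) ∂ν
      = ∫⁻ l in Ioi 0, ν {a | l < exp (-(μ * X a))} :=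
        lintegral_eq_lintegral_meas_lt ν (.of_forall fun _ ↦ (exp_pos _).le)
          (measurable_exp.comp_aemeasurable (hX.const_mul μ).neg)
    _ ≤ ∫⁻ l in Ioi 0, ENNReal.ofReal (1 / μ) * ENNReal.ofReal (-log l) :=
        setLIntegral_mono (measurable_log.neg.ennreal_ofReal.const_mul _) h_level
    _ = ENNReal.ofReal (1 / μ) := by
        rw [lintegral_const_mul' _ _ ENNReal.ofReal_ne_top, lintegral_ofReal_neg_log_Ioi_zero,
          mul_one]

theorem lintegral_mul_sq_le {ν : Measure α} {f g : α → ℝ≥0∞} (hf : AEMeasurable f ν)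
    (hg : AEMeasurable g ν) :
    (∫⁻ a, f a * g a ∂ν) ^ 2 ≤ (∫⁻ a, f a ^ 2 ∂ν) * ∫⁻ a, g a ^ 2 ∂ν := by
  have h := ENNReal.lintegral_mul_le_Lp_mul_Lq ν Real.HolderConjugate.two_two hf hg
  simp only [ENNReal.rpow_two, Pi.mul_apply] at h
  calc (∫⁻ a, f a * g a ∂ν) ^ 2
      ≤ ((∫⁻ a, f a ^ 2 ∂ν) ^ (1 / 2 : ℝ) * (∫⁻ a, g a ^ 2 ∂ν) ^ (1 / 2 : ℝ)) ^ 2 :=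
        pow_le_pow_left₀ zero_le h 2
    _ = (∫⁻ a, f a ^ 2 ∂ν) * ∫⁻ a, g a ^ 2 ∂ν := by
        rw [mul_pow, ← ENNReal.rpow_natCast, ← ENNReal.rpow_natCast, ← ENNReal.rpow_mul,
          ← ENNReal.rpow_mul]
        norm_num

theorem ofReal_sq_integral_le_lintegral_inv_mul_lintegral_mul_sq {ν : Measure α} {w g : α → ℝ}
    (hw : AEMeasurable w ν) (hg : AEMeasurable g ν) (hw_pos : ∀ a, 0 < w a) :
    ENNReal.ofReal ((∫ a, g a ∂ν) ^ 2)
      ≤ (∫⁻ a, ENNReal.ofReal (w a)⁻¹ ∂ν) * ∫⁻ a, ENNReal.ofReal (w a * g a ^ 2) ∂ν := by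
  have h_sqrt_sq : ∀ {x : ℝ}, 0 ≤ x → ENNReal.ofReal √x ^ 2 = ENNReal.ofReal x := fun hx ↦ by
    rw [← ENNReal.ofReal_pow (sqrt_nonneg _), sq_sqrt hx]
  have h_split : ∀ a, ‖g a‖ₑ = ENNReal.ofReal √(w a)⁻¹ * ENNReal.ofReal √(w a * g a ^ 2) := by
    intro a
    have hwa := hw_pos a
    rw [enorm_eq_ofReal_abs, ← ENNReal.ofReal_mul (sqrt_nonneg _), ← sqrt_mul (by positivity),
      inv_mul_cancel_left₀ hwa.ne', sqrt_sq_eq_abs]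
  calc ENNReal.ofReal ((∫ a, g a ∂ν) ^ 2) = ‖∫ a, g a ∂ν‖ₑ ^ 2 := by
        rw [enorm_eq_ofReal_abs, ← ENNReal.ofReal_pow (abs_nonneg _), sq_abs]
    _ ≤ (∫⁻ a, ‖g a‖ₑ ∂ν) ^ 2 :=
        pow_le_pow_left₀ zero_le (enorm_integral_le_lintegral_enorm g) 2
    _ ≤ (∫⁻ a, ENNReal.ofReal √(w a)⁻¹ ^ 2 ∂ν) *
          ∫⁻ a, ENNReal.ofReal √(w a * g a ^ 2) ^ 2 ∂ν := by
        simp_rw [h_split]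
        exact lintegral_mul_sq_le hw.inv.sqrt.ennreal_ofReal
          (hw.mul (hg.pow_const 2)).sqrt.ennreal_ofReal
    _ = _ := by
        simp_rw [h_sqrt_sq (inv_nonneg.2 (hw_pos _).le),
          h_sqrt_sq (mul_nonneg (hw_pos _).le (sq_nonneg _))]

theorem restrict_Ioc_setOf_sub_lt_le {ν : Measure ℝ} {A : ℝ → ℝ} {t T : ℝ}
    (hA_cont : ContinuousOn A (Icc t T))
    (hν : ∀ a b, t ≤ a → a ≤ b → b ≤ T → ν (Ioc a b) = ENNReal.ofReal (A b - A a)) (x : ℝ) :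
    ν.restrict (Ioc t T) {s | A s - A t < x} ≤ ENNReal.ofReal x := by
  set S := Icc t T ∩ A ⁻¹' Iic (A t + x)
  have h_sub : {s | A s - A t < x} ∩ Ioc t T ⊆ S := fun s ⟨hs, hsT⟩ ↦
    ⟨Ioc_subset_Icc_self hsT, by
      simp only [mem_preimage, mem_Iic, mem_ofPred_eq] at hs ⊢
      linarith⟩
  rw [Measure.restrict_apply' measurableSet_Ioc]
  rcases S.eq_empty_or_nonempty with hS | hS
  · rw [hS, subset_empty_iff] at h_sub
    simp [h_sub]
  have h_closed : IsClosed S := hA_cont.preimage_isClosed_of_isClosed isClosed_Icc isClosed_Iic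
  have hc : sSup S ∈ S := h_closed.csSup_mem hS (bddAbove_Icc.mono inter_subset_left)
  calc ν ({s | A s - A t < x} ∩ Ioc t T)
      ≤ ν (Ioc t (sSup S)) := measure_mono fun s hs ↦
        ⟨hs.2.1, le_csSup (bddAbove_Icc.mono inter_subset_left) (h_sub hs)⟩
    _ = ENNReal.ofReal (A (sSup S) - A t) := hν t _ le_rfl hc.1.1 hc.1.2
    _ ≤ ENNReal.ofReal x :=
        ENNReal.ofReal_le_ofReal (by linarith [show A (sSup S) ≤ A t + x from hc.2])

theorem stmt8_general
    (T : ℝ)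
    (A : ℝ → ℝ)
    (hA_cont : ContinuousOn A (Icc 0 T))
    (ν : Measure ℝ)
    (hν : ∀ a b : ℝ, 0 ≤ a → a ≤ b → b ≤ T → ν (Ioc a b) = ENNReal.ofReal (A b - A a))
    (μ : ℝ) (hμ : 0 < μ)
    (n : ℝ)
    (t : ℝ) (ht : t ∈ Icc 0 T)
    (h : ℝ → ℝ)
    (hint : IntegrableOn h (Ioc t T) ν) :
    ENNReal.ofReal ((∫ s in Ioc t T, Real.exp (-(n * (s - t))) * h s ∂ν) ^ 2)
      ≤ ENNReal.ofReal (1 / μ) *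
          ∫⁻ s in Ioc t T,
            ENNReal.ofReal
              (Real.exp (-(2 * n * (s - t))) * Real.exp (μ * (A s - A t)) * (h s) ^ 2) ∂ν := by
  have hA_cont' : ContinuousOn A (Icc t T) := hA_cont.mono (Icc_subset_Icc_left ht.1)
  have hA_meas : AEMeasurable A (ν.restrict (Ioc t T)) :=
    (hA_cont'.mono Ioc_subset_Icc_self).aemeasurable measurableSet_Ioc
  have h_weight : ∫⁻ s in Ioc t T, ENNReal.ofReal (exp (μ * (A s - A t)))⁻¹ ∂ν
      ≤ ENNReal.ofReal (1 / μ) := by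
    simp_rw [← exp_neg]
    exact lintegral_ofReal_exp_neg_mul_le (hA_meas.sub_const _)
      (restrict_Ioc_setOf_sub_lt_le hA_cont' fun a b ha ↦ hν a b (ht.1.trans ha)) hμ
  have h_integrand : ∀ s, exp (μ * (A s - A t)) * (exp (-(n * (s - t))) * h s) ^ 2
      = exp (-(2 * n * (s - t))) * exp (μ * (A s - A t)) * h s ^ 2 := fun s ↦ by
    rw [mul_pow, sq (exp _), ← exp_add]
    ring_nf
  calc _ ≤ (∫⁻ s in Ioc t T, ENNReal.ofReal (exp (μ * (A s - A t)))⁻¹ ∂ν) *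
        ∫⁻ s in Ioc t T, ENNReal.ofReal
          (exp (μ * (A s - A t)) * (exp (-(n * (s - t))) * h s) ^ 2) ∂ν :=
        ofReal_sq_integral_le_lintegral_inv_mul_lintegral_mul_sq
          (measurable_exp.comp_aemeasurable ((hA_meas.sub_const _).const_mul μ))
          ((by fun_prop : Measurable fun s ↦ exp (-(n * (s - t)))).aemeasurable.mul
            hint.aemeasurable) fun _ ↦ exp_pos _
    _ ≤ _ := by
        simp_rw [h_integrand]
        exact mul_le_mul_left h_weight _

/-- Step 4 of the proof of Theorem 3.3: weighted Cauchy–Schwarz estimate for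
Stieltjes integrals,
`(∫_{(t,T]} e^{−n(s−t)} h dA)² ≤ (1/μ) ∫_{(t,T]} e^{−2n(s−t)} e^{μ(A(s)−A(t))} h² dA`. -/
theorem stmt8
    (T : ℝ) (hT : 0 < T)
    (A : ℝ → ℝ)
    (hA_cont : ContinuousOn A (Icc 0 T))
    (hA_mono : MonotoneOn A (Icc 0 T))
    (hA0 : A 0 = 0)
    (hA_nonneg : ∀ s ∈ Icc 0 T, 0 ≤ A s)
    (ν : Measure ℝ)
    (hν : ∀ a b : ℝ, 0 ≤ a → a ≤ b → b ≤ T → ν (Ioc a b) = ENNReal.ofReal (A b - A a))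
    (μ : ℝ) (hμ : 0 < μ)
    (n : ℝ) (hn : 0 ≤ n)
    (t : ℝ) (ht : t ∈ Icc 0 T)
    (h : ℝ → ℝ) (hmeas : Measurable h)
    (hint : IntegrableOn h (Ioc t T) ν) :
    ENNReal.ofReal ((∫ s in Ioc t T, Real.exp (-(n * (s - t))) * h s ∂ν) ^ 2)
      ≤ ENNReal.ofReal (1 / μ) *
          ∫⁻ s in Ioc t T,
            ENNReal.ofReal
              (Real.exp (-(2 * n * (s - t))) * Real.exp (μ * (A s - A t)) * (h s) ^ 2) ∂ν :=
  stmt8_general T A hA_cont ν hν μ hμ n t ht h hint
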